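/- arXiv:0812.0195 — 2 statements merged into one kernel-verified Lean document; each statement's English description precedes it below -/
import Mathlib

section
/- Let A = (v_1, …, v_q) ⊂ ℤ^n be a homogeneous normal configuration. If each circuit of the toric ideal I_A with non-square-free terms is balanced, then I_A is generated by a finite set of circuits of I_A each having a square-free term. -/
open MvPolynomial

/-- The binomial `T^a - T^b` in `K[T_1,…,T_q]`. -/
noncomputable def binom (K : Type*) [Field K] {q : ℕ} (a b : Fin q → ℕ) :
    MvPolynomial (Fin q) K :=
  monomial (Finsupp.equivFunOnFinite.symm a) 1 -
    monomial (Finsupp.equivFunOnFinite.symm b) 1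

/-- The toric ideal of the configuration `v`. -/
noncomputable def toricIdeal (K : Type*) [Field K] {n q : ℕ} (v : Fin q → Fin n → ℤ) :
    Ideal (MvPolynomial (Fin q) K) :=
  Ideal.span { f | ∃ a b : Fin q → ℕ,
    (∑ i, a i • v i) = (∑ i, b i • v i) ∧ f = binom K a b }

/-- `α` is a circuit of the configuration `v`. -/
def IsCircuitVec {n q : ℕ} (v : Fin q → Fin n → ℤ) (α : Fin q → ℤ) : Prop :=
  α ≠ 0 ∧ (∑ i, α i • v i) = 0 ∧
    (∀ β : Fin q → ℚ, (∑ i, β i • (fun l => (v i l : ℚ))) = 0 → β ≠ 0 →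
      Function.support β ⊆ Function.support α →
      Function.support β = Function.support α) ∧
    Finset.univ.gcd α = 1

def posExp {q : ℕ} (α : Fin q → ℤ) : Fin q → ℕ := fun i => (α i).toNat

def negExp {q : ℕ} (α : Fin q → ℤ) : Fin q → ℕ := fun i => (-(α i)).toNat

/-- The binomial `T^a - T^b` has a square-free term. -/
def SqFreePair {q : ℕ} (a b : Fin q → ℕ) : Prop :=
  (∀ i, a i ≤ 1) ∨ (∀ i, b i ≤ 1)

/-- `f` is a circuit of the toric ideal of `v`. -/
def IsCircuitPoly (K : Type*) [Field K] {n q : ℕ} (v : Fin q → Fin n → ℤ)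
    (f : MvPolynomial (Fin q) K) : Prop :=
  ∃ α : Fin q → ℤ, IsCircuitVec v α ∧ f = binom K (posExp α) (negExp α)

/-- `f` is a circuit of the toric ideal of `v` having a square-free term. -/
def IsSqFreeCircuitPoly (K : Type*) [Field K] {n q : ℕ} (v : Fin q → Fin n → ℤ)
    (f : MvPolynomial (Fin q) K) : Prop :=
  ∃ α : Fin q → ℤ, IsCircuitVec v α ∧ f = binom K (posExp α) (negExp α) ∧
    SqFreePair (posExp α) (negExp α)

/-- The configuration lies on an affine hyperplane off the origin. -/
def IsHomogeneousConfig {n q : ℕ} (v : Fin q → Fin n → ℤ) : Prop :=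
  ∃ w : Fin n → ℝ, ∀ i, (∑ l, w l * (v i l : ℝ)) = 1

/-- `ℕA = ℤA ∩ ℝ₊A`. -/
def IsNormalConfig {n q : ℕ} (v : Fin q → Fin n → ℤ) : Prop :=
  ∀ x : Fin n → ℤ,
    x ∈ AddSubmonoid.closure (Set.range v) ↔
      (x ∈ AddSubgroup.closure (Set.range v) ∧
        ∃ c : Fin q → ℝ, (∀ i, 0 ≤ c i) ∧ ∀ l, (x l : ℝ) = ∑ i, c i * (v i l : ℝ))

/-- The toric ideal is generated by a finite set of circuits. -/
def GenByCircuits (K : Type*) [Field K] {n q : ℕ} (v : Fin q → Fin n → ℤ) : Prop :=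
  ∃ S : Finset (MvPolynomial (Fin q) K),
    (∀ f ∈ S, IsCircuitPoly K v f) ∧
      Ideal.span (S : Set (MvPolynomial (Fin q) K)) = toricIdeal K v

/-- The toric ideal is generated by a finite set of circuits with a square-free term. -/
def GenBySqFreeCircuits (K : Type*) [Field K] {n q : ℕ} (v : Fin q → Fin n → ℤ) : Prop :=
  ∃ S : Finset (MvPolynomial (Fin q) K),
    (∀ f ∈ S, IsSqFreeCircuitPoly K v f) ∧
      Ideal.span (S : Set (MvPolynomial (Fin q) K)) = toricIdeal K v

/-- `f` is a connector of the unbalanced binomial `T^a - T^b`, where `a` is the term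
with the smaller maximal exponent and `b` the one with the larger maximal exponent. -/
def IsConnector (K : Type*) [Field K] {n q : ℕ} (v : Fin q → Fin n → ℤ)
    (a b : Fin q → ℕ) (f : MvPolynomial (Fin q) K) : Prop :=
  ∃ c d : Fin q → ℕ, f = binom K c d ∧ f ∈ toricIdeal K v ∧
    (∀ i, c i ≤ 1) ∧ (∀ i, c i ≠ 0 → a i ≠ 0) ∧ (∃ i, d i ≠ 0 ∧ b i ≠ 0)

/-- Every unbalanced circuit of the toric ideal has a connector which is a
`K[T]`-linear combination of circuits with a square-free term. -/
def ConnectorCondition (K : Type*) [Field K] {n q : ℕ} (v : Fin q → Fin n → ℤ) : Prop :=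
  ∀ α : Fin q → ℤ, IsCircuitVec v α →
    Finset.univ.sup (posExp α) < Finset.univ.sup (negExp α) →
    ∃ f : MvPolynomial (Fin q) K, IsConnector K v (posExp α) (negExp α) f ∧
      f ∈ Ideal.span { g : MvPolynomial (Fin q) K | IsSqFreeCircuitPoly K v g }

/-!
Let `J` be the ideal spanned by the circuits with a square-free term. By Hilbert's basis theorem
it suffices to show `T^a - T^b ∈ J` whenever `∑ aᵢ vᵢ = ∑ bᵢ vᵢ`; homogeneity makes `∑ aᵢ` constant
on such fibres, so we argue by induction on it. If `a` and `b` share a variable, cancel it.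
Otherwise take a circuit `γ` conformal to `a - b`. If `γ⁺ ≤ 1`, then `γ⁺ ≤ a`, and trading `γ⁺` for
`γ⁻` inside `T^a` costs a multiple of `T^γ⁺ - T^γ⁻ ∈ J` and produces a monomial sharing a variable
with `T^b` (symmetrically if `γ⁻ ≤ 1`). Otherwise `γ` is balanced, `max γ⁺ = max γ⁻ = M`. If some
`k` with `a_k ≠ 0` has `a_k ≥ 2` or `γ_k ≤ 0`, and `γ_j = -M`, then `a - e_k - e_j - γ / M ≥ 0`,
so by normality `∑ aᵢ vᵢ - v_k - v_j ∈ ℕA`: this gives a `c` in the fibre sharing `k` with `a` and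
`j` with `b` (symmetrically for `b`). In the remaining case `a - b` is the sign vector of `γ`,
and primitivity of the circuit forces `|γ| ≤ 1`, contradicting that `γ` has no square-free term.
-/

section Binomial

variable (K : Type*) [Field K] {q : ℕ}

lemma binom_eq_neg (a b : Fin q → ℕ) : binom K a b = -binom K b a := by
  simp only [binom, neg_sub]

lemma monomial_mul_binom (u a b : Fin q → ℕ) :
    monomial (Finsupp.equivFunOnFinite.symm u) (1 : K) * binom K a b =
      binom K (u + a) (u + b) := by
  have hadd (x y : Fin q → ℕ) : Finsupp.equivFunOnFinite.symm (x + y) =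
      Finsupp.equivFunOnFinite.symm x + Finsupp.equivFunOnFinite.symm y :=
    Finsupp.ext fun _ => rfl
  simp only [binom, mul_sub, monomial_mul, one_mul, hadd]

def binomialCon (I : Ideal (MvPolynomial (Fin q) K)) : AddCon (Fin q → ℕ) where
  r a b := binom K a b ∈ I
  iseqv :=
    { refl := fun a => by simp [binom]
      symm := fun h => by rw [binom_eq_neg]; exact I.neg_mem h
      trans := fun h₁ h₂ => by
        convert I.add_mem h₁ h₂ using 1
        simp only [binom]; ring }
  add' {a b c d} h₁ h₂ := by
    have key : binom K (a + c) (b + d) =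
        monomial (Finsupp.equivFunOnFinite.symm c) 1 * binom K a b +
          monomial (Finsupp.equivFunOnFinite.symm b) 1 * binom K c d := by
      rw [monomial_mul_binom, monomial_mul_binom, add_comm c a, add_comm c b]
      simp only [binom]; ring
    rw [key]
    exact I.add_mem (I.mul_mem_left _ h₁) (I.mul_mem_left _ h₂)

end Binomial

open Function

def Conforms {ι R : Type*} [Mul R] [Zero R] [LT R] (y x : ι → R) : Prop :=
  ∀ i, y i ≠ 0 → 0 < y i * x i

section Conformal

variable {ι R : Type*} [CommRing R] [LinearOrder R] {x y z : ι → R}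

lemma conforms_refl [IsStrictOrderedRing R] (x : ι → R) : Conforms x x :=
  fun _ hi => mul_self_pos.2 hi

lemma Conforms.ne_zero (h : Conforms y x) {i : ι} (hi : y i ≠ 0) : x i ≠ 0 := by
  intro hx
  simpa [hx] using h i hi

lemma Conforms.support_subset (h : Conforms y x) : support y ⊆ support x :=
  fun _ hi => h.ne_zero hi

lemma Conforms.trans [IsStrictOrderedRing R] (h₁ : Conforms z y) (h₂ : Conforms y x) :
    Conforms z x := by
  intro i hz
  have hzy := h₁ i hz
  have hyx := h₂ i (h₁.ne_zero hz)
  have : 0 < z i * x i * (y i * y i) := by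
    rw [show z i * x i * (y i * y i) = z i * y i * (y i * x i) by ring]
    exact mul_pos hzy hyx
  exact pos_of_mul_pos_left this (mul_self_nonneg _)

end Conformal

section Elementary

variable {ι F : Type*} [Fintype ι] [Field F] [LinearOrder F] [IsStrictOrderedRing F]
  {W : Submodule F (ι → F)}

def IsElementary (W : Submodule F (ι → F)) (y : ι → F) : Prop :=
  y ∈ W ∧ y ≠ 0 ∧ ∀ z ∈ W, z ≠ 0 → support z ⊆ support y → support z = support y

/-- Subtracting from `y` the largest multiple of `z` that keeps it conformal to `y`
kills at least one more coordinate. -/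
lemma exists_conforms_support_ssubset {y z : ι → F} (hy : y ∈ W) (hz : z ∈ W)
    (hzy : support z ⊂ support y) (hpos : ∃ i, 0 < y i * z i) :
    ∃ y' ∈ W, y' ≠ 0 ∧ Conforms y' y ∧ support y' ⊂ support y := by
  classical
  set S := Finset.univ.filter fun i => 0 < y i * z i
  obtain ⟨i₀, hi₀S, hmin⟩ := S.exists_min_image (fun i => y i / z i)
    (let ⟨i, hi⟩ := hpos; ⟨i, by simpa [S] using hi⟩)
  have hi₀ : 0 < y i₀ * z i₀ := by simpa [S] using hi₀S
  have hz₀ : z i₀ ≠ 0 := by rintro h; simp [h] at hi₀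
  set t := y i₀ / z i₀
  have ht : 0 < t := div_pos_iff.2 (mul_pos_iff.1 hi₀)
  have hyz : ∀ i, y i = 0 → z i = 0 := fun i hi => by
    by_contra h; exact hzy.subset h hi
  set y' := y - t • z
  have hy'_apply : ∀ i, y' i = y i - t * z i := fun i => rfl
  have hnonneg : ∀ i, 0 ≤ y' i * y i := by
    intro i
    rw [hy'_apply]
    by_cases hi : 0 < y i * z i
    · have hle : t ≤ y i / z i := hmin i (by simpa [S] using hi)
      have hzi : z i ≠ 0 := by rintro h; simp [h] at hi
      have : t * (z i * y i) ≤ y i / z i * (z i * y i) :=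
        mul_le_mul_of_nonneg_right hle (by linarith)
      rw [show y i / z i * (z i * y i) = y i * y i by field_simp] at this
      nlinarith
    · nlinarith [mul_self_nonneg (y i)]
  have hconf : Conforms y' y := by
    intro i hi
    refine lt_of_le_of_ne (hnonneg i) fun h => hi ?_
    rcases mul_eq_zero.1 h.symm with h | h
    · exact h
    · rw [hy'_apply, h, hyz i h]; simp
  refine ⟨y', W.sub_mem hy (W.smul_mem t hz), ?_, hconf, hconf.support_subset, fun h => ?_⟩
  · obtain ⟨i, hiy, hiz⟩ := Set.exists_of_ssubset hzy
    intro h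
    have := congrFun h i
    simp only [mem_support, not_not] at hiz
    simp [hy'_apply, hiz] at this
    exact hiy this
  · have : y' i₀ = 0 := by rw [hy'_apply]; simp [t, hz₀]
    exact h (show y i₀ ≠ 0 by rintro h; simp [h] at hi₀) this

theorem exists_isElementary_conforms {x : ι → F} (hx : x ∈ W) (hx0 : x ≠ 0) :
    ∃ y, IsElementary W y ∧ Conforms y x := by
  obtain ⟨y, ⟨hy, hy0, hyx⟩, hmin⟩ :=
    (measure fun y : ι → F => (support y).ncard).wf.has_min
      {y | y ∈ W ∧ y ≠ 0 ∧ Conforms y x} ⟨x, hx, hx0, conforms_refl x⟩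
  refine ⟨y, ⟨hy, hy0, fun z hz hz0 hzy => ?_⟩, hyx⟩
  by_contra hne
  have hzy' : support z ⊂ support y := hzy.ssubset_of_ne hne
  obtain ⟨i, hi⟩ : ∃ i, z i ≠ 0 := Function.ne_iff.1 hz0
  have hyi : y i ≠ 0 := hzy hi
  obtain ⟨w, hw, hwy, hpos⟩ : ∃ w ∈ W, support w ⊂ support y ∧ ∃ i, 0 < y i * w i := by
    rcases (mul_ne_zero hyi hi).lt_or_gt with h | h
    · exact ⟨-z, W.neg_mem hz, by rwa [Function.support_neg], i, by simpa using h⟩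
    · exact ⟨z, hz, hzy', i, h⟩
  obtain ⟨y', hy', hy'0, hy'y, hss⟩ := exists_conforms_support_ssubset hy hw hwy hpos
  exact hmin y' ⟨hy', hy'0, hy'y.trans hyx⟩ (Set.ncard_lt_ncard hss (Set.toFinite _))

end Elementary

lemma exists_primitive_pos_smul {ι : Type*} [Fintype ι] {y : ι → ℚ} (hy : y ≠ 0) :
    ∃ γ : ι → ℤ, Finset.univ.gcd γ = 1 ∧ ∃ c : ℚ, 0 < c ∧ ∀ i, (γ i : ℚ) = c * y i := by
  -- the common denominator `b` may be negative, so we scale by `b * b`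
  obtain ⟨⟨b, hb⟩, hint⟩ := IsLocalization.exist_integer_multiples_of_finite (nonZeroDivisors ℤ) y
  choose z hz using hint
  have hb0 : (b : ℚ) ≠ 0 := Int.cast_ne_zero.2 (nonZeroDivisors.ne_zero hb)
  have hbz : ∀ i, ((b * z i : ℤ) : ℚ) = b * b * y i := fun i => by
    have h : (z i : ℚ) = b * y i := by simpa using hz i
    push_cast [h]; ring
  obtain ⟨i₀, hi₀⟩ : ∃ i, y i ≠ 0 := Function.ne_iff.1 hy
  obtain ⟨γ, hγ, hgcd⟩ := Finset.extract_gcd (fun i => b * z i) ⟨i₀, Finset.mem_univ _⟩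
  have hg : 0 < Finset.univ.gcd fun i => b * z i := by
    refine lt_of_le_of_ne ?_ fun h => hi₀ ?_
    · rw [← Finset.normalize_gcd, ← Int.abs_eq_normalize]; exact abs_nonneg _
    · have h₀ := hbz i₀
      rw [hγ i₀ (Finset.mem_univ _), ← h, zero_mul, Int.cast_zero] at h₀
      simpa [hb0] using h₀.symm
  refine ⟨γ, hgcd, b * b / (Finset.univ.gcd fun i => b * z i : ℤ),
    div_pos (mul_self_pos.2 hb0) (by exact_mod_cast hg), fun i => ?_⟩
  have h := hbz i
  rw [hγ i (Finset.mem_univ _), Int.cast_mul] at h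
  field_simp
  linarith

section Circuit

variable {n q : ℕ}

def ratKer (v : Fin q → Fin n → ℤ) : Submodule ℚ (Fin q → ℚ) :=
  LinearMap.ker (Fintype.linearCombination ℚ fun i l => (v i l : ℚ))

variable {v : Fin q → Fin n → ℤ}

lemma mem_ratKer {β : Fin q → ℚ} :
    β ∈ ratKer v ↔ ∑ i, β i • (fun l => (v i l : ℚ)) = 0 := by
  rw [ratKer, LinearMap.mem_ker, Fintype.linearCombination_apply]

lemma intCast_mem_ratKer {α : Fin q → ℤ} :
    (fun i => (α i : ℚ)) ∈ ratKer v ↔ ∑ i, α i • v i = 0 := by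
  simp only [mem_ratKer, funext_iff, Finset.sum_apply, Pi.smul_apply, smul_eq_mul, Pi.zero_apply]
  exact forall_congr' fun l => by exact_mod_cast Iff.rfl

theorem exists_isCircuitVec_conforms {α : Fin q → ℤ} (hα : ∑ i, α i • v i = 0) (hα0 : α ≠ 0) :
    ∃ γ, IsCircuitVec v γ ∧ Conforms γ α := by
  obtain ⟨y, ⟨hy, hy0, hymin⟩, hyα⟩ := exists_isElementary_conforms (intCast_mem_ratKer.2 hα)
    (fun h => hα0 (funext fun i => by simpa using congrFun h i))
  obtain ⟨γ, hgcd, c, hc, hγ⟩ := exists_primitive_pos_smul hy0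
  have hsupp : support γ = support y := by
    ext i
    rw [mem_support, mem_support, ← Int.cast_ne_zero (α := ℚ), hγ]
    simp [hc.ne']
  refine ⟨γ, ⟨fun h => hy0 ?_, ?_, fun β hβ hβ0 hsub => ?_, hgcd⟩, fun i hi => ?_⟩
  · rw [← support_eq_empty_iff, ← hsupp, h, Function.support_zero]
  · rw [← intCast_mem_ratKer, show (fun i => (γ i : ℚ)) = c • y from funext hγ]
    exact (ratKer v).smul_mem c hy
  · rw [hsupp] at hsub ⊢
    exact hymin β (mem_ratKer.2 hβ) hβ0 hsub
  · have h := hyα i (by rw [← mem_support, ← hsupp]; exact hi)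
    have : (0 : ℚ) < γ i * α i := by rw [hγ, mul_assoc]; exact mul_pos hc h
    exact_mod_cast this

lemma IsCircuitVec.eq_smul_of_support_subset {γ : Fin q → ℤ} (hγ : IsCircuitVec v γ)
    {β : Fin q → ℚ} (hβ : β ∈ ratKer v) (hsub : support β ⊆ support γ) {i : Fin q}
    (hi : γ i ≠ 0) : β = (β i / (γ i : ℚ)) • fun j => (γ j : ℚ) := by
  by_contra hne
  set ε := β - (β i / (γ i : ℚ)) • fun j => (γ j : ℚ)
  have hε : ε ∈ ratKer v :=
    (ratKer v).sub_mem hβ ((ratKer v).smul_mem _ (intCast_mem_ratKer.2 hγ.2.1))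
  have hεsub : support ε ⊆ support γ := by
    refine (Function.support_sub _ _).trans (Set.union_subset hsub fun j hj => ?_)
    have hj' : β i / (γ i : ℚ) * γ j ≠ 0 := hj
    exact fun h => hj' (by simp [h])
  have hεi : ε i = 0 := by simp [ε, hi]
  have := hγ.2.2.1 ε (mem_ratKer.1 hε) (sub_ne_zero.2 hne) hεsub
  exact (this.symm ▸ hi : i ∈ support ε) hεi

lemma IsCircuitVec.abs_le_one_of_sign {γ : Fin q → ℤ} (hγ : IsCircuitVec v γ)
    (h : ∑ i, (γ i).sign • v i = 0) (j : Fin q) : |γ j| ≤ 1 := by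
  obtain ⟨i, hi⟩ : ∃ i, γ i ≠ 0 := Function.ne_iff.1 hγ.1
  have hsub : support (fun j => ((γ j).sign : ℚ)) ⊆ support γ :=
    fun j hj h => hj (by simp [h])
  have hprop := hγ.eq_smul_of_support_subset (intCast_mem_ratKer.2 h) hsub hi
  have hγ_eq : ∀ j, γ j = |γ i| * (γ j).sign := by
    intro j
    have h₁ := congrFun hprop j
    simp only [Pi.smul_apply, smul_eq_mul] at h₁
    have h₂ : ((γ j).sign * γ i : ℚ) = (γ i).sign * γ j := by rw [h₁]; field_simp
    have h₃ : (γ j).sign * γ i = (γ i).sign * γ j := by exact_mod_cast h₂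
    rw [← Int.sign_mul_self_eq_abs]
    rcases hi.lt_or_gt with h | h
    · rw [Int.sign_eq_neg_one_of_neg h] at h₃ ⊢; linarith
    · rw [Int.sign_eq_one_of_pos h] at h₃ ⊢; linarith
  have hdvd : |γ i| ∣ 1 := hγ.2.2.2 ▸ Finset.dvd_gcd fun j _ => Dvd.intro _ (hγ_eq j).symm
  have hsign : |(γ j).sign| ≤ 1 := by
    by_cases hj : γ j = 0
    · simp [hj]
    · rw [Int.abs_sign_of_ne_zero hj]
  calc |γ j| = |γ i| * |(γ j).sign| := by rw [← abs_abs (γ i), ← abs_mul, ← hγ_eq]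
    _ ≤ 1 * 1 := mul_le_mul (Int.le_of_dvd one_pos hdvd) hsign (abs_nonneg _) zero_le_one
    _ = 1 := one_mul 1

end Circuit

section Config

variable {n q : ℕ} {v : Fin q → Fin n → ℤ}

lemma sum_sub_smul_eq_zero {a b : Fin q → ℕ} (h : ∑ i, a i • v i = ∑ i, b i • v i) :
    ∑ i, ((a i : ℤ) - b i) • v i = 0 := by
  simp only [sub_smul, Finset.sum_sub_distrib, natCast_zsmul, h, sub_self]

lemma sum_posExp_smul_eq {γ : Fin q → ℤ} (h : ∑ i, γ i • v i = 0) :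
    ∑ i, posExp γ i • v i = ∑ i, negExp γ i • v i := by
  rw [← sub_eq_zero, ← h, ← Finset.sum_sub_distrib]
  refine Finset.sum_congr rfl fun i _ => ?_
  rw [← natCast_zsmul, ← natCast_zsmul, ← sub_smul, posExp, negExp, Int.toNat_sub_toNat_neg]

lemma IsHomogeneousConfig.sum_eq_zero (hhom : IsHomogeneousConfig v) {γ : Fin q → ℤ}
    (h : ∑ i, γ i • v i = 0) : ∑ i, γ i = 0 := by
  obtain ⟨w, hw⟩ := hhom
  have key : ∑ l, w l * ((∑ i, γ i • v i) l : ℝ) = ∑ i, (γ i : ℝ) := by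
    simp only [Finset.sum_apply, Pi.smul_apply, smul_eq_mul, Int.cast_sum, Int.cast_mul,
      Finset.mul_sum]
    rw [Finset.sum_comm]
    simp_rw [mul_left_comm (w _), ← Finset.mul_sum, hw, mul_one]
  rw [h] at key
  exact_mod_cast (by simpa using key.symm : ∑ i, (γ i : ℝ) = 0)

lemma IsHomogeneousConfig.sum_eq_sum (hhom : IsHomogeneousConfig v) {a b : Fin q → ℕ}
    (h : ∑ i, a i • v i = ∑ i, b i • v i) : ∑ i, a i = ∑ i, b i := by
  have := hhom.sum_eq_zero (sum_sub_smul_eq_zero h)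
  rw [Finset.sum_sub_distrib, sub_eq_zero] at this
  exact_mod_cast this

lemma IsHomogeneousConfig.exists_pos (hhom : IsHomogeneousConfig v) {γ : Fin q → ℤ}
    (h : ∑ i, γ i • v i = 0) (hγ : γ ≠ 0) : ∃ i, 0 < γ i := by
  by_contra! hle
  exact hγ (funext fun i =>
    (Finset.sum_eq_zero_iff_of_nonpos fun i _ => hle i).1 (hhom.sum_eq_zero h) i
      (Finset.mem_univ i))

lemma IsHomogeneousConfig.exists_neg (hhom : IsHomogeneousConfig v) {γ : Fin q → ℤ}
    (h : ∑ i, γ i • v i = 0) (hγ : γ ≠ 0) : ∃ i, γ i < 0 := by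
  have h' : ∑ i, (-γ) i • v i = 0 := by
    simp only [Pi.neg_apply, neg_smul, Finset.sum_neg_distrib, h, neg_zero]
  obtain ⟨i, hi⟩ := hhom.exists_pos h' (neg_ne_zero.2 hγ)
  exact ⟨i, neg_pos.1 hi⟩

/-- The real vector witnessing normality is `z - γ / M`, which is nonnegative and has the same
image as `z`. -/
lemma IsNormalConfig.exists_nat_sum_smul_eq_of_le (hnorm : IsNormalConfig v) {z γ : Fin q → ℤ}
    {M : ℤ} (hM : 0 < M) (hγ : ∑ i, γ i • v i = 0) (hle : ∀ i, γ i ≤ M * z i) :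
    ∃ e : Fin q → ℕ, ∑ i, e i • v i = ∑ i, z i • v i := by
  have hM' : (0 : ℝ) < M := by exact_mod_cast hM
  have hγl : ∀ l, ∑ i, (γ i : ℝ) * v i l = 0 := fun l => by
    have := congrFun hγ l
    simp only [Finset.sum_apply, Pi.smul_apply, smul_eq_mul, Pi.zero_apply] at this
    exact_mod_cast this
  have hmem := (hnorm (∑ i, z i • v i)).2
    ⟨sum_mem fun i _ => zsmul_mem (AddSubgroup.subset_closure (Set.mem_range_self i)) _,
      fun i => z i - γ i / M, fun i => ?_, fun l => ?_⟩
  · obtain ⟨e, he⟩ := AddSubmonoid.mem_closure_range_iff_of_fintype.1 hmem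
    exact ⟨e, he.symm⟩
  · rw [sub_nonneg, div_le_iff₀' hM']
    exact_mod_cast hle i
  · simp only [sub_mul, div_mul_eq_mul_div, Finset.sum_sub_distrib, ← Finset.sum_div, hγl,
      zero_div, sub_zero, Finset.sum_apply, Pi.smul_apply, smul_eq_mul, Int.cast_sum,
      Int.cast_mul]

lemma IsNormalConfig.exists_sum_smul_eq_ne_zero (hnorm : IsNormalConfig v) {a : Fin q → ℕ}
    {γ : Fin q → ℤ} {M : ℤ} {j k : Fin q} (hγ : ∑ i, γ i • v i = 0) (hγM : ∀ i, γ i ≤ M)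
    (hj : γ j = -M) (hM : 0 < M) (hγa : ∀ i, 0 < γ i → a i ≠ 0) (haj : a j = 0)
    (hak : a k ≠ 0) (hk : 2 ≤ a k ∨ γ k ≤ 0) :
    ∃ c : Fin q → ℕ, ∑ i, c i • v i = ∑ i, a i • v i ∧ c k ≠ 0 ∧ c j ≠ 0 := by
  have hjk : j ≠ k := by rintro rfl; exact hak haj
  obtain ⟨e, he⟩ := hnorm.exists_nat_sum_smul_eq_of_le (z := fun i =>
      (a i : ℤ) - (if i = k then 1 else 0) - (if i = j then 1 else 0)) hM hγ fun i => by
    have hγi := hγM i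
    have hai : 0 < γ i → 1 ≤ (a i : ℤ) := fun h => by have := hγa i h; omega
    split_ifs with hik hij hij
    · exact absurd (hij ▸ hik) hjk
    · subst hik
      rcases hk with h | h
      · nlinarith
      · have : (1 : ℤ) ≤ a i := by omega
        nlinarith
    · subst hij; simp [hj, haj]
    · rcases le_or_gt (γ i) 0 with h | h
      · nlinarith [Int.natCast_nonneg (a i)]
      · nlinarith [hai h]
  refine ⟨e + Pi.single k 1 + Pi.single j 1, ?_, by simp [hjk.symm], by simp [hjk]⟩
  simp only [Pi.add_apply, add_smul, Finset.sum_add_distrib, he, sub_smul, Finset.sum_sub_distrib,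
    ite_smul, Pi.single_apply, one_smul, zero_smul, Finset.sum_ite_eq', Finset.mem_univ,
    if_true, natCast_zsmul]
  abel

end Config

lemma exists_eq_and_eq_neg_of_sup_eq {q : ℕ} {γ : Fin q → ℤ}
    (hbal : Finset.univ.sup (posExp γ) = Finset.univ.sup (negExp γ)) (hpos : ∃ i, 0 < γ i) :
    ∃ M : ℤ, 0 < M ∧ (∀ i, γ i ≤ M ∧ -M ≤ γ i) ∧ (∃ i, γ i = M) ∧ ∃ j, γ j = -M := by
  obtain ⟨i₀, hi₀⟩ := hpos
  have hne : (Finset.univ : Finset (Fin q)).Nonempty := ⟨i₀, Finset.mem_univ _⟩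
  obtain ⟨i, -, hi⟩ := Finset.exists_mem_eq_sup _ hne (posExp γ)
  obtain ⟨j, -, hj⟩ := Finset.exists_mem_eq_sup _ hne (negExp γ)
  set M := Finset.univ.sup (posExp γ)
  have hp : ∀ k, (γ k).toNat ≤ M := fun k => Finset.le_sup (f := posExp γ) (Finset.mem_univ k)
  have hn : ∀ k, (-γ k).toNat ≤ M := fun k =>
    hbal ▸ Finset.le_sup (f := negExp γ) (Finset.mem_univ k)
  have hi : (γ i).toNat = M := hi.symm
  have hj : (-γ j).toNat = M := hbal ▸ hj.symm
  have := hp i₀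
  refine ⟨M, by omega, fun k => ⟨by have := hp k; omega, by have := hn k; omega⟩, ⟨i, by omega⟩,
    ⟨j, by omega⟩⟩

section Fibers

variable {n q : ℕ} {v : Fin q → Fin n → ℤ}

def RelatesFibersBelow (r : AddCon (Fin q → ℕ)) (v : Fin q → Fin n → ℤ) (d : ℕ) : Prop :=
  ∀ a b : Fin q → ℕ, ∑ i, a i • v i = ∑ i, b i • v i → ∑ i, a i < d → r a b

namespace RelatesFibersBelow

variable {r : AddCon (Fin q → ℕ)} {d : ℕ} {a b : Fin q → ℕ}

lemma rel_of_ne_zero_of_ne_zero (h : RelatesFibersBelow r v d)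
    (hab : ∑ i, a i • v i = ∑ i, b i • v i) (hd : ∑ i, a i ≤ d) {i : Fin q} (ha : a i ≠ 0)
    (hb : b i ≠ 0) : r a b := by
  classical
  set s : Fin q → ℕ := Pi.single i 1
  have hsplit : ∀ c : Fin q → ℕ, c i ≠ 0 → c = (c - s) + s := fun c hc => by
    funext x
    by_cases hx : x = i
    · subst hx; simp [s]; omega
    · simp [s, hx]
  have hsum : ∑ x, a x = ∑ x, (a - s) x + 1 := by
    conv_lhs => rw [hsplit a ha]
    simp [Finset.sum_add_distrib, s]
  rw [hsplit a ha, hsplit b hb] at hab ⊢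
  refine r.add (h _ _ ?_ (by omega)) (r.refl s)
  simpa only [Pi.add_apply, add_smul, Finset.sum_add_distrib, add_left_inj] using hab

lemma rel_of_rel_of_le (h : RelatesFibersBelow r v d) (hhom : IsHomogeneousConfig v)
    (hab : ∑ i, a i • v i = ∑ i, b i • v i) (hd : ∑ i, a i ≤ d) {s t : Fin q → ℕ} (hst : r s t)
    (hst' : ∑ i, s i • v i = ∑ i, t i • v i) (hsa : s ≤ a) {j : Fin q} (ht : t j ≠ 0)
    (hb : b j ≠ 0) : r a b := by
  have ha : a = (a - s) + s := (tsub_add_cancel_of_le hsa).symm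
  have hc : ∑ i, ((a - s) + t) i • v i = ∑ i, a i • v i := by
    conv_rhs => rw [ha]
    simp only [Pi.add_apply, add_smul, Finset.sum_add_distrib, hst']
  have hac : r ((a - s) + s) ((a - s) + t) := r.add (r.refl _) hst
  rw [← ha] at hac
  refine r.trans hac
    (h.rel_of_ne_zero_of_ne_zero (hc.trans hab) ((hhom.sum_eq_sum hc).le.trans hd) ?_ hb)
  simp [ht]

lemma rel_of_normal (h : RelatesFibersBelow r v d) (hhom : IsHomogeneousConfig v)
    (hnorm : IsNormalConfig v) (hab : ∑ i, a i • v i = ∑ i, b i • v i) (hd : ∑ i, a i ≤ d)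
    {γ : Fin q → ℤ} {M : ℤ} {j k : Fin q} (hγ : ∑ i, γ i • v i = 0) (hγM : ∀ i, γ i ≤ M)
    (hj : γ j = -M) (hM : 0 < M) (hγa : ∀ i, 0 < γ i → a i ≠ 0) (haj : a j = 0)
    (hbj : b j ≠ 0) (hak : a k ≠ 0) (hk : 2 ≤ a k ∨ γ k ≤ 0) : r a b := by
  obtain ⟨c, hc, hck, hcj⟩ := hnorm.exists_sum_smul_eq_ne_zero hγ hγM hj hM hγa haj hak hk
  exact r.trans (h.rel_of_ne_zero_of_ne_zero hc.symm hd hak hck)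
    (h.rel_of_ne_zero_of_ne_zero (hc.trans hab) ((hhom.sum_eq_sum hc).le.trans hd) hcj hbj)

end RelatesFibersBelow

end Fibers

section SqFreeCircuitIdeal

variable (K : Type*) [Field K] {n q : ℕ} (v : Fin q → Fin n → ℤ)

noncomputable def sqFreeCircuitIdeal : Ideal (MvPolynomial (Fin q) K) :=
  Ideal.span {g | IsSqFreeCircuitPoly K v g}

lemma sqFreeCircuitIdeal_le_toricIdeal : sqFreeCircuitIdeal K v ≤ toricIdeal K v :=
  Ideal.span_le.2 fun _ ⟨γ, hγ, hg, _⟩ =>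
    Ideal.subset_span ⟨posExp γ, negExp γ, sum_posExp_smul_eq hγ.2.1, hg⟩

variable {K v}

variable {d : ℕ} {a b : Fin q → ℕ} {γ : Fin q → ℤ}

lemma RelatesFibersBelow.rel_of_sqFreePair
    (h : RelatesFibersBelow (binomialCon K (sqFreeCircuitIdeal K v)) v d)
    (hhom : IsHomogeneousConfig v) (hab : ∑ i, a i • v i = ∑ i, b i • v i) (hd : ∑ i, a i ≤ d)
    (hγ : IsCircuitVec v γ) (hγa : ∀ i, 0 < γ i → a i ≠ 0) (hγb : ∀ i, γ i < 0 → b i ≠ 0)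
    (hsq : SqFreePair (posExp γ) (negExp γ)) :
    binomialCon K (sqFreeCircuitIdeal K v) a b := by
  set r := binomialCon K (sqFreeCircuitIdeal K v)
  have hrel : r (posExp γ) (negExp γ) := Ideal.subset_span ⟨γ, hγ, rfl, hsq⟩
  have hpn := sum_posExp_smul_eq hγ.2.1
  rcases hsq with hp | hn
  · obtain ⟨j, hj⟩ := hhom.exists_neg hγ.2.1 hγ.1
    refine h.rel_of_rel_of_le hhom hab hd hrel hpn (fun i => ?_) (j := j) ?_ (hγb j hj)
    · have := hp i; have := hγa i; simp only [posExp] at *; omega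
    · simp only [negExp]; omega
  · obtain ⟨i, hi⟩ := hhom.exists_pos hγ.2.1 hγ.1
    refine r.symm (h.rel_of_rel_of_le hhom hab.symm (hhom.sum_eq_sum hab ▸ hd) (r.symm hrel)
      hpn.symm (fun k => ?_) (j := i) ?_ (hγa i hi))
    · have := hn k; have := hγb k; simp only [negExp] at *; omega
    · simp only [posExp]; omega

lemma RelatesFibersBelow.rel_of_not_sqFreePair
    (h : RelatesFibersBelow (binomialCon K (sqFreeCircuitIdeal K v)) v d)
    (hhom : IsHomogeneousConfig v) (hnorm : IsNormalConfig v)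
    (hab : ∑ i, a i • v i = ∑ i, b i • v i) (hd : ∑ i, a i ≤ d) (hdisj : ∀ i, a i = 0 ∨ b i = 0)
    (hγ : IsCircuitVec v γ) (hγa : ∀ i, 0 < γ i → a i ≠ 0) (hγb : ∀ i, γ i < 0 → b i ≠ 0)
    (hsq : ¬ SqFreePair (posExp γ) (negExp γ))
    (hbal : Finset.univ.sup (posExp γ) = Finset.univ.sup (negExp γ)) :
    binomialCon K (sqFreeCircuitIdeal K v) a b := by
  obtain ⟨M, hM, hγM, ⟨i₁, hi₁⟩, ⟨j₁, hj₁⟩⟩ :=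
    exists_eq_and_eq_neg_of_sup_eq hbal (hhom.exists_pos hγ.2.1 hγ.1)
  by_cases hA : ∃ k, a k ≠ 0 ∧ (2 ≤ a k ∨ γ k ≤ 0)
  · obtain ⟨k, hak, hk⟩ := hA
    have hbj : b j₁ ≠ 0 := hγb j₁ (by omega)
    exact h.rel_of_normal hhom hnorm hab hd hγ.2.1 (fun i => (hγM i).1) hj₁ hM hγa
      ((hdisj j₁).resolve_right hbj) hbj hak hk
  by_cases hB : ∃ k, b k ≠ 0 ∧ (2 ≤ b k ∨ 0 ≤ γ k)
  · obtain ⟨k, hbk, hk⟩ := hB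
    have hai : a i₁ ≠ 0 := hγa i₁ (by omega)
    have hγ' : ∑ i, (-γ) i • v i = 0 := by
      simp only [Pi.neg_apply, neg_smul, Finset.sum_neg_distrib, hγ.2.1, neg_zero]
    refine AddCon.symm _ (h.rel_of_normal hhom hnorm hab.symm (hhom.sum_eq_sum hab ▸ hd) hγ'
      (M := M) (fun i => ?_) ?_ hM (fun i hi => hγb i (by simpa using hi))
      ((hdisj i₁).resolve_left hai) hai hbk ?_)
    · have := (hγM i).2; simp only [Pi.neg_apply]; omega
    · simp [hi₁]
    · simp only [Pi.neg_apply]; omega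
  push Not at hA hB
  have hsign : ∀ i, (γ i).sign = (a i : ℤ) - b i := fun i => by
    have := hA i; have := hB i; have := hγa i; have := hγb i; have := hdisj i
    rcases lt_trichotomy (γ i) 0 with h | h | h
    · rw [Int.sign_eq_neg_one_of_neg h]; omega
    · rw [h, Int.sign_zero]; omega
    · rw [Int.sign_eq_one_of_pos h]; omega
  have hsum : ∑ i, (γ i).sign • v i = 0 := by
    simp_rw [hsign]; exact sum_sub_smul_eq_zero hab
  refine absurd (Or.inl fun i => ?_) hsq
  have := abs_le.1 (hγ.abs_le_one_of_sign hsum i)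
  simp only [posExp]; omega

lemma RelatesFibersBelow.rel_of_disjoint
    (h : RelatesFibersBelow (binomialCon K (sqFreeCircuitIdeal K v)) v d)
    (hhom : IsHomogeneousConfig v) (hnorm : IsNormalConfig v)
    (hbal : ∀ α : Fin q → ℤ, IsCircuitVec v α → ¬ SqFreePair (posExp α) (negExp α) →
      Finset.univ.sup (posExp α) = Finset.univ.sup (negExp α))
    (hab : ∑ i, a i • v i = ∑ i, b i • v i) (hd : ∑ i, a i ≤ d)
    (hdisj : ∀ i, a i = 0 ∨ b i = 0) (hne : a ≠ b) :
    binomialCon K (sqFreeCircuitIdeal K v) a b := by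
  obtain ⟨γ, hγ, hconf⟩ := exists_isCircuitVec_conforms (sum_sub_smul_eq_zero hab)
    fun h0 => hne (funext fun i => by simpa [sub_eq_zero] using congrFun h0 i)
  have hγa : ∀ i, 0 < γ i → a i ≠ 0 := fun i hi => by
    have : 0 < (a i : ℤ) - b i := pos_of_mul_pos_right (hconf i hi.ne') hi.le
    omega
  have hγb : ∀ i, γ i < 0 → b i ≠ 0 := fun i hi => by
    have : (a i : ℤ) - b i < 0 := neg_of_mul_pos_right (hconf i hi.ne) hi.le
    omega
  by_cases hsq : SqFreePair (posExp γ) (negExp γ)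
  · exact h.rel_of_sqFreePair hhom hab hd hγ hγa hγb hsq
  · exact h.rel_of_not_sqFreePair hhom hnorm hab hd hdisj hγ hγa hγb hsq (hbal γ hγ hsq)

theorem relatesFibersBelow_sqFreeCircuitIdeal (hhom : IsHomogeneousConfig v)
    (hnorm : IsNormalConfig v)
    (hbal : ∀ α : Fin q → ℤ, IsCircuitVec v α → ¬ SqFreePair (posExp α) (negExp α) →
      Finset.univ.sup (posExp α) = Finset.univ.sup (negExp α)) (d : ℕ) :
    RelatesFibersBelow (binomialCon K (sqFreeCircuitIdeal K v)) v d := by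
  induction d with
  | zero => exact fun _ _ _ hd => absurd hd (Nat.not_lt_zero _)
  | succ d ih =>
    intro a b hab hd
    rw [Nat.lt_succ_iff] at hd
    by_cases hcommon : ∃ i, a i ≠ 0 ∧ b i ≠ 0
    · obtain ⟨i, ha, hb⟩ := hcommon
      exact ih.rel_of_ne_zero_of_ne_zero hab hd ha hb
    by_cases hne : a = b
    · exact hne ▸ AddCon.refl _ a
    push Not at hcommon
    exact ih.rel_of_disjoint hhom hnorm hbal hab hd (fun i => by grind) hne

end SqFreeCircuitIdeal

theorem genBySqFreeCircuits_of_balanced_general (K : Type*) [Field K] {n q : ℕ}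
    (v : Fin q → Fin n → ℤ)
    (hhom : IsHomogeneousConfig v) (hnorm : IsNormalConfig v)
    (hbal : ∀ α : Fin q → ℤ, IsCircuitVec v α → ¬ SqFreePair (posExp α) (negExp α) →
      Finset.univ.sup (posExp α) = Finset.univ.sup (negExp α)) :
    GenBySqFreeCircuits K v := by
  have hJ : sqFreeCircuitIdeal K v = toricIdeal K v := by
    refine le_antisymm (sqFreeCircuitIdeal_le_toricIdeal K v) (Ideal.span_le.2 ?_)
    rintro _ ⟨a, b, hab, rfl⟩
    exact relatesFibersBelow_sqFreeCircuitIdeal hhom hnorm hbal _ a b hab (Nat.lt_succ_self _)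
  obtain ⟨S, hS, hspan⟩ := (Submodule.fg_span_iff_fg_span_finset_subset _).1
    (IsNoetherian.noetherian (sqFreeCircuitIdeal K v))
  exact ⟨S, hS, hspan.symm.trans hJ⟩

/-- If each circuit of the toric ideal of a homogeneous normal configuration with
non-square-free terms is balanced, then the toric ideal is generated by a finite set of
circuits with a square-free term. -/
theorem genBySqFreeCircuits_of_balanced (K : Type*) [Field K] {n q : ℕ}
    (hn : 0 < n) (hq : 0 < q) (v : Fin q → Fin n → ℤ)
    (hhom : IsHomogeneousConfig v) (hnorm : IsNormalConfig v)
    (hbal : ∀ α : Fin q → ℤ, IsCircuitVec v α → ¬ SqFreePair (posExp α) (negExp α) →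
      Finset.univ.sup (posExp α) = Finset.univ.sup (negExp α)) :
    GenBySqFreeCircuits K v :=
  genBySqFreeCircuits_of_balanced_general K v hhom hnorm hbal
end

section
/- Let A = (v_1, …, v_q) ⊂ ℤ^n be a homogeneous normal configuration. If the toric ideal I_A is minimally generated by a finite set B of binomials (i.e., B generates I_A but no proper subset of B generates I_A), then every binomial in B has a square-free term. -/
open MvPolynomial

/-!
Let `f = T^a - T^b ∈ B` with `a_j ≥ 2` and `b_k ≥ 2`, and `γ = ∑ a_i v_i = ∑ b_i v_i`. Then
`2 (γ - v_j - v_k) = ∑ (a - 2e_j + b - 2e_k)_i v_i` lies in `ℕA`, so `γ - v_j - v_k ∈ ℤA ∩ ℝ₊A`,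
and normality writes it as `∑ c_i v_i` with `c ∈ ℕ^q`. For `a = a' + e_j`, `b = b' + e_k` this gives
`f = T_j (T^{a'} - T^{c + e_k}) + T_k (T^{c + e_j} - T^{b'})` with both binomials in `I_A`.
Homogeneity of `A` makes `I_A` graded by total degree, and both binomials have degree
`deg f - 1`. A homogeneous element of the span of `B` of degree below `deg f` lies in the span of
`B \ {f}`, so `B \ {f}` already generates `I_A`, against minimality.
-/

attribute [local instance] MvPolynomial.gradedAlgebra

open DirectSum in
theorem Ideal.mem_span_diff_singleton_of_not_le {ι σ A : Type*} [Semiring A]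
    [DecidableEq ι] [AddCommMonoid ι] [PartialOrder ι] [CanonicallyOrderedAdd ι]
    [SetLike σ A] [AddSubmonoidClass σ A] (𝒜 : ι → σ) [GradedRing 𝒜]
    {S : Set A} (hS : ∀ s ∈ S, SetLike.IsHomogeneousElem 𝒜 s) {f p : A} {d e : ι}
    (hf : f ∈ 𝒜 d) (hp : p ∈ 𝒜 e) (hde : ¬d ≤ e) (hpS : p ∈ Ideal.span S) :
    p ∈ Ideal.span (S \ {f}) := by
  have hspan : Ideal.span S ≤ Ideal.span (S \ {f}) ⊔ Ideal.span {f} := by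
    rw [← Ideal.span_union]
    exact Ideal.span_mono fun s hs => by by_cases h : s = f <;> simp [h, hs]
  obtain ⟨r, hr, _, ht, rfl⟩ := Submodule.mem_sup.mp (hspan hpS)
  obtain ⟨t, rfl⟩ := Ideal.mem_span_singleton'.mp ht
  have hcomp : (decompose 𝒜 (r + t * f) e : A) = decompose 𝒜 r e := by
    rw [decompose_add, DirectSum.add_apply, AddMemClass.coe_add,
      coe_decompose_mul_of_right_mem_of_not_le 𝒜 hf hde, add_zero]
  rw [← decompose_of_mem_same 𝒜 hp, hcomp]
  exact Ideal.homogeneous_span 𝒜 _ (fun s hs => hS s hs.1) e hr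

theorem Ideal.span_diff_singleton_eq_span {A : Type*} [Semiring A] {S : Set A} {f : A} (hf : f ∈ S)
    (hspan : f ∈ Ideal.span (S \ {f})) : Ideal.span (S \ {f}) = Ideal.span S := by
  conv_rhs => rw [← Set.insert_eq_of_mem hf, ← Set.insert_sdiff_singleton]
  exact (Submodule.span_insert_eq_span hspan).symm

theorem Pi.exists_eq_add_single_of_le {ι : Type*} [DecidableEq ι] {a : ι → ℕ} {j : ι} {m : ℕ}
    (h : m ≤ a j) : ∃ a₀ : ι → ℕ, a = a₀ + Pi.single j m := by
  refine ⟨Function.update a j (a j - m), funext fun i => ?_⟩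
  rcases eq_or_ne i j with rfl | hij
  · simp [Nat.sub_add_cancel h]
  · simp [hij]

section Binomial

variable {K : Type*} [Field K] {n q : ℕ}

theorem binom_add_binom (a b c : Fin q → ℕ) : binom K a b + binom K b c = binom K a c := by
  simp only [binom, sub_add_sub_cancel]

theorem X_mul_binom (j : Fin q) (a b : Fin q → ℕ) :
    X j * binom K a b = binom K (a + Pi.single j 1) (b + Pi.single j 1) := by
  have hshift (c : Fin q → ℕ) : Finsupp.equivFunOnFinite.symm (c + Pi.single j 1) =
      Finsupp.single j 1 + Finsupp.equivFunOnFinite.symm c := by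
    ext i; simp [add_comm, Pi.single_apply, Finsupp.single_apply, eq_comm]
  simp only [binom, mul_sub, X, monomial_mul, one_mul, hshift]

theorem binom_isHomogeneous {a b : Fin q → ℕ} (hab : ∑ i, a i = ∑ i, b i) :
    (binom K a b).IsHomogeneous (∑ i, a i) := by
  refine (isHomogeneous_monomial _ ?_).sub (isHomogeneous_monomial _ ?_) <;>
    simp [Finsupp.degree_eq_sum, hab]

/-- The monomial map `T_i ↦ x^{v_i}` into the Laurent polynomial ring `K[ℤ^n]`. -/
noncomputable def toricMap (K : Type*) [Field K] (v : Fin q → Fin n → ℤ) :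
    MvPolynomial (Fin q) K →ₐ[K] AddMonoidAlgebra K (Fin n → ℤ) :=
  aeval fun i => AddMonoidAlgebra.single (v i) 1

theorem toricMap_monomial (v : Fin q → Fin n → ℤ) (a : Fin q → ℕ) :
    toricMap K v (monomial (Finsupp.equivFunOnFinite.symm a) 1) =
      AddMonoidAlgebra.single (∑ i, a i • v i) 1 := by
  rw [toricMap, aeval_monomial, map_one, one_mul, Finsupp.prod_fintype _ _ fun _ => pow_zero _]
  simp only [Finsupp.coe_equivFunOnFinite_symm, AddMonoidAlgebra.single_pow, one_pow]
  rw [AddMonoidAlgebra.prod_single, Finset.prod_const_one]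

theorem toricIdeal_le_ker_toricMap (v : Fin q → Fin n → ℤ) :
    toricIdeal K v ≤ RingHom.ker (toricMap K v) := by
  rw [toricIdeal, Ideal.span_le]
  rintro f ⟨a, b, hab, rfl⟩
  rw [SetLike.mem_coe, RingHom.mem_ker, binom, map_sub, toricMap_monomial, toricMap_monomial,
    hab, sub_self]

theorem sum_nsmul_eq_of_binom_mem_toricIdeal {v : Fin q → Fin n → ℤ} {a b : Fin q → ℕ}
    (h : binom K a b ∈ toricIdeal K v) : ∑ i, a i • v i = ∑ i, b i • v i := by
  have h0 := toricIdeal_le_ker_toricMap v h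
  rw [RingHom.mem_ker, binom, map_sub, toricMap_monomial, toricMap_monomial, sub_eq_zero] at h0
  exact (AddMonoidAlgebra.single_left_injective one_ne_zero) h0

end Binomial

section Configuration

variable {K : Type*} [Field K] {n q : ℕ} {v : Fin q → Fin n → ℤ}

theorem cast_sum_nsmul_apply {R : Type*} [Ring R] (c : Fin q → ℕ) (l : Fin n) :
    (((∑ i, c i • v i) l : ℤ) : R) = ∑ i, (c i : R) * v i l := by
  simp only [nsmul_eq_mul, Finset.sum_apply, Pi.mul_apply, Pi.natCast_apply, Int.cast_sum,
    Int.cast_mul, Int.cast_natCast]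

theorem IsHomogeneousConfig.sum_eq_of_sum_nsmul_eq (hhom : IsHomogeneousConfig v)
    {a b : Fin q → ℕ} (hab : ∑ i, a i • v i = ∑ i, b i • v i) : ∑ i, a i = ∑ i, b i := by
  obtain ⟨w, hw⟩ := hhom
  have hdeg (c : Fin q → ℕ) : ∑ l, w l * ((∑ i, c i • v i) l : ℝ) = ∑ i, c i := by
    simp only [cast_sum_nsmul_apply, Finset.mul_sum, Nat.cast_sum]
    rw [Finset.sum_comm]
    simp_rw [mul_left_comm (w _), ← Finset.mul_sum, hw, mul_one]
  exact_mod_cast (hdeg a).symm.trans (hab ▸ hdeg b)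

theorem IsHomogeneousConfig.isHomogeneous_of_binom_mem_toricIdeal
    (hhom : IsHomogeneousConfig v) {a b : Fin q → ℕ}
    (h : binom K a b ∈ toricIdeal K v) : (binom K a b).IsHomogeneous (∑ i, a i) :=
  binom_isHomogeneous (hhom.sum_eq_of_sum_nsmul_eq (sum_nsmul_eq_of_binom_mem_toricIdeal h))

theorem IsNormalConfig.mem_closure_of_nsmul_mem (hnorm : IsNormalConfig v) {m : ℕ} (hm : m ≠ 0)
    {x : Fin n → ℤ} (hx : x ∈ AddSubgroup.closure (Set.range v))
    (hmx : m • x ∈ AddSubmonoid.closure (Set.range v)) :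
    x ∈ AddSubmonoid.closure (Set.range v) := by
  obtain ⟨d, hd⟩ := AddSubmonoid.mem_closure_range_iff_of_fintype.mp hmx
  refine (hnorm x).mpr ⟨hx, fun i => d i / m, fun i => by positivity, fun l => ?_⟩
  have hl : (m : ℝ) * x l = ∑ i, (d i : ℝ) * (v i l : ℝ) := by
    rw [← cast_sum_nsmul_apply, ← hd]
    simp
  simp_rw [div_mul_eq_mul_div, ← Finset.sum_div, ← hl]
  field_simp

theorem IsNormalConfig.sum_nsmul_sub_sub_mem_closure (hnorm : IsNormalConfig v)
    {a b : Fin q → ℕ} (hab : ∑ i, a i • v i = ∑ i, b i • v i) {j k : Fin q}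
    (hj : 2 ≤ a j) (hk : 2 ≤ b k) :
    ∑ i, a i • v i - v j - v k ∈ AddSubmonoid.closure (Set.range v) := by
  obtain ⟨a₀, rfl⟩ := Pi.exists_eq_add_single_of_le hj
  obtain ⟨b₀, rfl⟩ := Pi.exists_eq_add_single_of_le hk
  change Fintype.linearCombination ℕ v _ = Fintype.linearCombination ℕ v _ at hab
  change Fintype.linearCombination ℕ v _ - _ - _ ∈ _
  simp only [map_add, Fintype.linearCombination_apply_single] at hab ⊢
  refine hnorm.mem_closure_of_nsmul_mem two_ne_zero ?_ ?_
  · have hv (i : Fin q) : v i ∈ AddSubgroup.closure (Set.range v) :=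
      AddSubgroup.subset_closure ⟨i, rfl⟩
    refine sub_mem (sub_mem (add_mem ?_ (nsmul_mem (hv j) 2)) (hv j)) (hv k)
    rw [Fintype.linearCombination_apply]
    exact sum_mem fun i _ => nsmul_mem (hv i) _
  · refine AddSubmonoid.mem_closure_range_iff_of_fintype.mpr ⟨a₀ + b₀, ?_⟩
    change _ = Fintype.linearCombination ℕ v _
    rw [map_add]
    linear_combination (exp := 1) hab

theorem exists_binom_eq_X_mul_add_X_mul (hhom : IsHomogeneousConfig v) (hnorm : IsNormalConfig v)
    {a b : Fin q → ℕ} (hab : ∑ i, a i • v i = ∑ i, b i • v i) {j k : Fin q}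
    (hj : 2 ≤ a j) (hk : 2 ≤ b k) :
    ∃ d < ∑ i, a i, ∃ g h : MvPolynomial (Fin q) K, g ∈ toricIdeal K v ∧ h ∈ toricIdeal K v ∧
      g.IsHomogeneous d ∧ h.IsHomogeneous d ∧ binom K a b = X j * g + X k * h := by
  obtain ⟨c, hc⟩ := AddSubmonoid.mem_closure_range_iff_of_fintype.mp
    (hnorm.sum_nsmul_sub_sub_mem_closure hab hj hk)
  obtain ⟨a', rfl⟩ := Pi.exists_eq_add_single_of_le (one_le_two.trans hj)
  obtain ⟨b', rfl⟩ := Pi.exists_eq_add_single_of_le (one_le_two.trans hk)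
  change Fintype.linearCombination ℕ v _ = Fintype.linearCombination ℕ v _ at hab
  change Fintype.linearCombination ℕ v _ - _ - _ = Fintype.linearCombination ℕ v _ at hc
  simp only [map_add, Fintype.linearCombination_apply_single, one_smul] at hab hc
  have hg : ∑ i, a' i • v i = ∑ i, (c + Pi.single k 1 : Fin q → ℕ) i • v i := by
    change Fintype.linearCombination ℕ v _ = Fintype.linearCombination ℕ v _
    rw [map_add, Fintype.linearCombination_apply_single, one_smul]
    linear_combination (exp := 1) hc
  have hh : ∑ i, (c + Pi.single j 1 : Fin q → ℕ) i • v i = ∑ i, b' i • v i := by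
    change Fintype.linearCombination ℕ v _ = Fintype.linearCombination ℕ v _
    rw [map_add, Fintype.linearCombination_apply_single, one_smul]
    linear_combination (exp := 1) hab - hc
  have hgdeg := hhom.sum_eq_of_sum_nsmul_eq hg
  have hhdeg := hhom.sum_eq_of_sum_nsmul_eq hh
  have hsum (u : Fin q → ℕ) (i : Fin q) :
      ∑ l, (u + Pi.single i 1 : Fin q → ℕ) l = ∑ l, u l + 1 := by
    simp [Finset.sum_add_distrib]
  refine ⟨∑ i, a' i, by rw [hsum]; omega, binom K a' (c + Pi.single k 1),
    binom K (c + Pi.single j 1) b', Ideal.subset_span ⟨_, _, hg, rfl⟩,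
    Ideal.subset_span ⟨_, _, hh, rfl⟩, binom_isHomogeneous hgdeg, ?_, ?_⟩
  · convert binom_isHomogeneous hhdeg using 1
    rw [hgdeg, hsum, hsum]
  · rw [X_mul_binom, X_mul_binom, add_right_comm c, binom_add_binom]

end Configuration

theorem sqFree_of_minimal_binomial_generation_general (K : Type*) [Field K] {n q : ℕ}
    (v : Fin q → Fin n → ℤ)
    (hhom : IsHomogeneousConfig v) (hnorm : IsNormalConfig v)
    (B : Finset (MvPolynomial (Fin q) K))
    (hbin : ∀ f ∈ B, ∃ a b : Fin q → ℕ, f = binom K a b)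
    (hgen : Ideal.span (B : Set (MvPolynomial (Fin q) K)) = toricIdeal K v)
    (hmin : ∀ B' : Finset (MvPolynomial (Fin q) K), B' ⊂ B →
      Ideal.span (B' : Set (MvPolynomial (Fin q) K)) ≠ toricIdeal K v) :
    ∀ f ∈ B, ∀ a b : Fin q → ℕ, f = binom K a b → SqFreePair a b := by
  classical
  intro f hf a b rfl
  by_contra hsq
  obtain ⟨⟨j, hj⟩, k, hk⟩ : (∃ j, 2 ≤ a j) ∧ ∃ k, 2 ≤ b k := by
    simpa [SqFreePair, not_or, Nat.lt_iff_add_one_le] using hsq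
  have hB (s) (hs : s ∈ (B : Set (MvPolynomial (Fin q) K))) : s ∈ toricIdeal K v :=
    hgen ▸ Ideal.subset_span hs
  have hBhom : ∀ s ∈ (B : Set (MvPolynomial (Fin q) K)),
      SetLike.IsHomogeneousElem (homogeneousSubmodule (Fin q) K) s := by
    intro s hs
    obtain ⟨c, d, rfl⟩ := hbin s hs
    exact ⟨_, hhom.isHomogeneous_of_binom_mem_toricIdeal (hB _ hs)⟩
  obtain ⟨d, hd, g, h, hg, hh, hgd, hhd, hfgh⟩ := exists_binom_eq_X_mul_add_X_mul (K := K)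
    hhom hnorm (sum_nsmul_eq_of_binom_mem_toricIdeal (hB _ hf)) hj hk
  have hlower (p) (hp : p ∈ toricIdeal K v) (hpd : p.IsHomogeneous d) :
      p ∈ Ideal.span (↑B \ {binom K a b}) :=
    Ideal.mem_span_diff_singleton_of_not_le _ hBhom
      (hhom.isHomogeneous_of_binom_mem_toricIdeal (hB _ hf)) hpd (not_le.mpr hd) (hgen ▸ hp)
  have hf' : binom K a b ∈ Ideal.span (↑B \ {binom K a b}) := by
    have := add_mem (Ideal.mul_mem_left _ (X j) (hlower g hg hgd))
      (Ideal.mul_mem_left _ (X k) (hlower h hh hhd))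
    rwa [← hfgh] at this
  exact hmin _ (Finset.erase_ssubset hf) <| by
    rw [Finset.coe_erase, Ideal.span_diff_singleton_eq_span hf hf', hgen]

/-- If the toric ideal of a homogeneous normal configuration is minimally generated by a
finite set `B` of binomials, then every binomial of `B` has a square-free term. -/
theorem sqFree_of_minimal_binomial_generation (K : Type*) [Field K] {n q : ℕ}
    (hn : 0 < n) (hq : 0 < q) (v : Fin q → Fin n → ℤ)
    (hhom : IsHomogeneousConfig v) (hnorm : IsNormalConfig v)
    (B : Finset (MvPolynomial (Fin q) K))
    (hbin : ∀ f ∈ B, ∃ a b : Fin q → ℕ, f = binom K a b)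
    (hgen : Ideal.span (B : Set (MvPolynomial (Fin q) K)) = toricIdeal K v)
    (hmin : ∀ B' : Finset (MvPolynomial (Fin q) K), B' ⊂ B →
      Ideal.span (B' : Set (MvPolynomial (Fin q) K)) ≠ toricIdeal K v) :
    ∀ f ∈ B, ∀ a b : Fin q → ℕ, f = binom K a b → SqFreePair a b :=
  sqFree_of_minimal_binomial_generation_general K v hhom hnorm B hbin hgen hmin
end
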